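/- Let λ₁ > 0, λ₂ > 0, α > 0 and θ ∈ [-1, 1], let D = λ₂α/(λ₁+λ₂α) + θλ₁·(2/(2λ₁+λ₂α) + 1/(λ₁+2λ₂α) - 2/(λ₁+λ₂α)) and K = λ₁/D. Then ∫₀^∞ K e^{-λ₁x}(1 - e^{-λ₂αx})(1 - θe^{-λ₂αx}(1 - 2e^{-λ₁x})) dx = 1. -/
import Mathlib


open MeasureTheory Real

lemma gwed_aux_int {c : ℝ} (hc : 0 < c) :
    (∫ x in Set.Ioi (0 : ℝ), Real.exp (-(c * x))) = 1 / c := by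
  have h := MeasureTheory.integral_comp_mul_left_Ioi (fun x => Real.exp (-x)) 0 hc
  rw [mul_zero] at h
  rw [h, integral_exp_neg_Ioi_zero, smul_eq_mul, mul_one, one_div]

theorem gwed_density_integrates_to_one
    (l₁ l₂ α θ : ℝ) (hl₁ : 0 < l₁) (hl₂ : 0 < l₂) (hα : 0 < α)
    (hθ : θ ∈ Set.Icc (-1 : ℝ) 1)
    (D K : ℝ)
    (hD : D = l₂ * α / (l₁ + l₂ * α)
        + θ * l₁ * (2 / (2 * l₁ + l₂ * α) + 1 / (l₁ + 2 * l₂ * α)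
          - 2 / (l₁ + l₂ * α)))
    (hK : K = l₁ / D) :
    (∫ x in Set.Ioi (0 : ℝ),
        K * Real.exp (-l₁ * x) * (1 - Real.exp (-l₂ * α * x))
          * (1 - θ * Real.exp (-l₂ * α * x) * (1 - 2 * Real.exp (-l₁ * x)))) = 1 := by
  obtain ⟨hθ1, hθ2⟩ := hθ
  have ha : 0 < l₂ * α := mul_pos hl₂ hα
  have h1 : 0 < l₁ + l₂ * α := by linarith
  have h2 : 0 < 2 * l₁ + l₂ * α := by linarith
  have h3 : 0 < l₁ + 2 * (l₂ * α) := by linarith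
  have h4 : 0 < 2 * l₁ + 2 * (l₂ * α) := by linarith
  -- positivity of D
  have hDmul : D * ((l₁ + l₂ * α) * (2 * l₁ + l₂ * α) * (l₁ + 2 * (l₂ * α)))
      = (l₂ * α) * (2 * l₁ ^ 2 + 5 * l₁ * (l₂ * α) + 2 * (l₂ * α) ^ 2
        + θ * l₁ * ((l₂ * α) - l₁)) := by
    rw [hD]; field_simp; ring
  have hNpos : 0 < (l₂ * α) * (2 * l₁ ^ 2 + 5 * l₁ * (l₂ * α) + 2 * (l₂ * α) ^ 2
      + θ * l₁ * ((l₂ * α) - l₁)) := by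
    have h5 : 0 < 2 * l₁ ^ 2 + 5 * l₁ * (l₂ * α) + 2 * (l₂ * α) ^ 2
        + θ * l₁ * ((l₂ * α) - l₁) := by
      nlinarith [mul_pos hl₁ ha, sq_nonneg (l₂ * α - l₁), mul_pos hl₁ hl₁, mul_pos ha ha,
        mul_nonneg (mul_nonneg (by linarith : (0:ℝ) ≤ 1 + θ) hl₁.le) ha.le,
        mul_nonneg (mul_nonneg (by linarith : (0:ℝ) ≤ 1 - θ) hl₁.le) ha.le]
    exact mul_pos ha h5
  have hDpos : 0 < D := by
    have hP : 0 < (l₁ + l₂ * α) * (2 * l₁ + l₂ * α) * (l₁ + 2 * (l₂ * α)) := by positivity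
    nlinarith
  -- integrability of exponentials
  have J : ∀ c : ℝ, 0 < c →
      IntegrableOn (fun x => Real.exp (-(c * x))) (Set.Ioi (0 : ℝ)) := by
    intro c hc
    simpa [neg_mul] using exp_neg_integrableOn_Ioi 0 hc
  have i1 := J l₁ hl₁
  have i2 := (J (l₁ + l₂ * α) h1).const_mul (1 + θ)
  have i3 := (J (2 * l₁ + l₂ * α) h2).const_mul (2 * θ)
  have i4 := (J (l₁ + 2 * (l₂ * α)) h3).const_mul θ
  have i5 := (J (2 * l₁ + 2 * (l₂ * α)) h4).const_mul (2 * θ)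
  -- rewrite the integrand
  have key : ∀ x : ℝ,
      K * Real.exp (-l₁ * x) * (1 - Real.exp (-l₂ * α * x))
          * (1 - θ * Real.exp (-l₂ * α * x) * (1 - 2 * Real.exp (-l₁ * x)))
      = K * (Real.exp (-(l₁ * x))
          - (1 + θ) * Real.exp (-((l₁ + l₂ * α) * x))
          + 2 * θ * Real.exp (-((2 * l₁ + l₂ * α) * x))
          + θ * Real.exp (-((l₁ + 2 * (l₂ * α)) * x))
          - 2 * θ * Real.exp (-((2 * l₁ + 2 * (l₂ * α)) * x))) := by
    intro x
    rw [show -((l₁ + l₂ * α) * x) = -(l₁ * x) + -(l₂ * α * x) by ring,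
        show -((2 * l₁ + l₂ * α) * x) = -(l₁ * x) + (-(l₁ * x) + -(l₂ * α * x)) by ring,
        show -((l₁ + 2 * (l₂ * α)) * x) = -(l₂ * α * x) + (-(l₁ * x) + -(l₂ * α * x)) by ring,
        show -((2 * l₁ + 2 * (l₂ * α)) * x)
          = (-(l₁ * x) + -(l₂ * α * x)) + (-(l₁ * x) + -(l₂ * α * x)) by ring]
    simp only [Real.exp_add, neg_mul]
    ring
  have h12 : Integrable (fun x => Real.exp (-(l₁ * x))
      - (1 + θ) * Real.exp (-((l₁ + l₂ * α) * x))) (volume.restrict (Set.Ioi 0)) :=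
    i1.sub i2
  have h123 : Integrable (fun x => Real.exp (-(l₁ * x))
      - (1 + θ) * Real.exp (-((l₁ + l₂ * α) * x))
      + 2 * θ * Real.exp (-((2 * l₁ + l₂ * α) * x))) (volume.restrict (Set.Ioi 0)) :=
    h12.add i3
  have h1234 : Integrable (fun x => Real.exp (-(l₁ * x))
      - (1 + θ) * Real.exp (-((l₁ + l₂ * α) * x))
      + 2 * θ * Real.exp (-((2 * l₁ + l₂ * α) * x))
      + θ * Real.exp (-((l₁ + 2 * (l₂ * α)) * x))) (volume.restrict (Set.Ioi 0)) :=
    h123.add i4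
  rw [MeasureTheory.integral_congr_ae (Filter.Eventually.of_forall fun x => key x),
    MeasureTheory.integral_const_mul,
    MeasureTheory.integral_sub h1234 i5,
    MeasureTheory.integral_add h123 i4,
    MeasureTheory.integral_add h12 i3,
    MeasureTheory.integral_sub i1 i2,
    MeasureTheory.integral_const_mul, MeasureTheory.integral_const_mul, MeasureTheory.integral_const_mul,
    MeasureTheory.integral_const_mul,
    gwed_aux_int hl₁, gwed_aux_int h1, gwed_aux_int h2, gwed_aux_int h3, gwed_aux_int h4,
    hK, div_mul_eq_mul_div, div_eq_one_iff_eq hDpos.ne', hD]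
  field_simp
  ring
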